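/- D_1 ∩ (1, ∞) = [z_1, ∞), where z_1 = 1/(q_G − 1) = q_G. -/

import Mathlib

open Filter Topology

noncomputable section

/-- The value `Σ_{i≥0} d i / q^(i+1)` of a (0-indexed) digit sequence `d` in base `q`;
this corresponds to `((d_i)_{i≥1})_q` with `d_i = d (i-1)`. -/
def seqVal (q : ℝ) (d : ℕ → ℕ) : ℝ := ∑' i : ℕ, (d i : ℝ) / q ^ (i + 1)

/-- `d` is a `q`-expansion of `x` with digits in `{0,1}`. -/
def IsExpansion (q x : ℝ) (d : ℕ → ℕ) : Prop :=
  (∀ i, d i ≤ 1) ∧ x = seqVal q d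

/-- `x` has a unique `q`-expansion. -/
def HasUniqueExpansion (q x : ℝ) : Prop := ∃! d : ℕ → ℕ, IsExpansion q x d

/-- The set `U(x)` of univoque bases of `x`. -/
def UBases (x : ℝ) : Set ℝ := {q | 1 < q ∧ q < 2 ∧ HasUniqueExpansion q x}

/-- `q_s(x) = inf U(x)`. -/
def qs (x : ℝ) : ℝ := sInf (UBases x)

/-- The univoque set `U_q` of `x ∈ [0, 1/(q-1)]` with a unique `q`-expansion. -/
def Uset (q : ℝ) : Set ℝ :=
  {x | x ∈ Set.Icc 0 (1 / (q - 1)) ∧ HasUniqueExpansion q x}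

/-- The set `U_q'` of digit sequences which are the unique `q`-expansion of their value. -/
def USeq (q : ℝ) : Set (ℕ → ℕ) :=
  {d | (∀ i, d i ≤ 1) ∧ ∀ e : ℕ → ℕ, IsExpansion q (seqVal q d) e → e = d}

/-- The Thue–Morse sequence: `τ 0 = 0`, `τ (2n) = τ n`, `τ (2n+1) = 1 - τ n`. -/
def IsThueMorse (τ : ℕ → ℕ) : Prop :=
  τ 0 = 0 ∧ (∀ n, τ (2 * n) = τ n) ∧ ∀ n, τ (2 * n + 1) = 1 - τ n

/-- `q` is the Komornik–Loreti constant: the base in `(1,2)` with `1 = Σ_{i≥1} τ_i q^{-i}`. -/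
def IsKL (τ : ℕ → ℕ) (q : ℝ) : Prop :=
  1 < q ∧ q < 2 ∧ (1 : ℝ) = ∑' i : ℕ, (τ (i + 1) : ℝ) / q ^ (i + 1)

/-- `Q` is the sequence of bases `q_n`: `Q 0 = 1` and for `n ≥ 1`, `Q n` is the root in
`(1,2)` of `1 = Σ_{i=1}^{2^n} τ_i q^{-i}`. -/
def IsBaseSeq (τ : ℕ → ℕ) (Q : ℕ → ℝ) : Prop :=
  Q 0 = 1 ∧ ∀ n, 1 ≤ n → 1 < Q n ∧ Q n < 2 ∧
    (1 : ℝ) = ∑ i ∈ Finset.range (2 ^ n), (τ (i + 1) : ℝ) / (Q n) ^ (i + 1)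

/-- `D_n = ⋃_{q ∈ (q_{n-1}, q_n]} U_q`. -/
def D (Q : ℕ → ℝ) (n : ℕ) : Set ℝ := ⋃ q ∈ Set.Ioc (Q (n - 1)) (Q n), Uset q

/-- The golden ratio. -/
def qG : ℝ := (1 + Real.sqrt 5) / 2

/-- Strict lexicographical order on digit sequences. -/
def seqLt (c d : ℕ → ℕ) : Prop := ∃ n, (∀ i, i < n → c i = d i) ∧ c n < d n

/-- The word `τ_1 ⋯ τ_m`. -/
def tmPrefix (τ : ℕ → ℕ) (m : ℕ) : List ℕ := (List.range m).map fun i => τ (i + 1)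

/-- `w⁻`: decrease the last digit of a word by 1. -/
def lastDec (w : List ℕ) : List ℕ := w.dropLast ++ [w.getLastD 0 - 1]

/-- `w⁺`: increase the last digit of a word by 1. -/
def lastInc (w : List ℕ) : List ℕ := w.dropLast ++ [w.getLastD 0 + 1]

/-- The reflection of a word. -/
def reflect (w : List ℕ) : List ℕ := w.map fun d => 1 - d

/-- The infinite sequence given by the prefix `p` followed by periodic repetition of `w`. -/
def prefPeriodic (p w : List ℕ) : ℕ → ℕ := fun j =>
  if j < p.length then p.getD j 0 else w.getD ((j - p.length) % w.length) 0

/-- `z_n = ((τ_1⋯τ_{2^{n-1}})(τ_{2^{n-1}+1}⋯τ_{2^n})^∞)_{q_n}`. -/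
def zVal (τ : ℕ → ℕ) (Q : ℕ → ℝ) (n : ℕ) : ℝ :=
  seqVal (Q n) (prefPeriodic (tmPrefix τ (2 ^ (n - 1)))
    ((List.range (2 ^ (n - 1))).map fun i => τ (2 ^ (n - 1) + (i + 1))))

/-- `z_{1,k} = Σ_{i=1}^k q_G^{-i} + 1/(q_G^k (q_G^2 - 1))`. -/
def z1 (k : ℕ) : ℝ :=
  (∑ i ∈ Finset.range k, 1 / qG ^ (i + 1)) + 1 / (qG ^ k * (qG ^ 2 - 1))

/-!
If `d` is the unique `q`-expansion of `x` and `y` is the value of its tail `d₁d₂⋯`, then `d₀ = 0`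
forces `y < 1` and `d₀ = 1` forces `y > 1/(q-1) - 1`: otherwise changing the first digit and
expanding the remainder greedily gives a second expansion. When `q² ≤ q + 1`, i.e. `q ≤ q_G`, a
block `01` or `10` in `d` violates one of these constraints, so `d` is constant and `x` is `0` or
`1/(q-1)`. As `q` runs over `(1, q_G]`, `1/(q-1)` runs over `[q_G, ∞)`; and
`z_1 = (1^∞)_{q_G} = 1/(q_G - 1) = q_G`.
-/

open Set Real goldenRatio

section Digits

variable {q : ℝ} {d : ℕ → ℕ}

lemma summable_digit_div_pow (hq : 1 < q) (hd : ∀ i, d i ≤ 1) :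
    Summable fun i => (d i : ℝ) / q ^ (i + 1) := by
  have hq0 : 0 < q := by linarith
  have hgeom : Summable fun i : ℕ => (1 / q) * (1 / q) ^ i :=
    (summable_geometric_of_lt_one (by positivity) ((div_lt_one hq0).2 hq)).mul_left _
  refine hgeom.of_nonneg_of_le (fun i => by positivity) fun i => ?_
  rw [← pow_succ', one_div_pow]
  gcongr
  exact_mod_cast hd i

lemma seqVal_nonneg (hq : 0 ≤ q) (d : ℕ → ℕ) : 0 ≤ seqVal q d :=
  tsum_nonneg fun i => by positivity

lemma seqVal_one (hq : 1 < q) : seqVal q (fun _ => 1) = 1 / (q - 1) := by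
  have hq0 : 0 < q := by linarith
  have hterm : (fun i : ℕ => ((1 : ℕ) : ℝ) / q ^ (i + 1)) = fun i => (1 / q) * (1 / q) ^ i := by
    funext i
    rw [← pow_succ', one_div_pow, Nat.cast_one]
  rw [seqVal, hterm, tsum_mul_left,
    tsum_geometric_of_lt_one (by positivity) ((div_lt_one hq0).2 hq)]
  field_simp

lemma seqVal_le_one_div_sub_one (hq : 1 < q) (hd : ∀ i, d i ≤ 1) : seqVal q d ≤ 1 / (q - 1) := by
  rw [← seqVal_one hq]
  refine (summable_digit_div_pow hq hd).tsum_le_tsum (fun i => ?_)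
    (summable_digit_div_pow hq fun _ => le_rfl)
  gcongr
  exact_mod_cast hd i

lemma seqVal_eq_head_add_tail (hq : 1 < q) (hd : ∀ i, d i ≤ 1) :
    seqVal q d = (d 0 + seqVal q fun i => d (i + 1)) / q := by
  rw [seqVal, (summable_digit_div_pow hq hd).tsum_eq_zero_add, seqVal, add_div,
    ← tsum_div_const]
  congr 1
  · ring
  · congr 1
    funext i
    rw [pow_succ, div_mul_eq_div_div]

end Digits

section Greedy

def greedyRem (q x : ℝ) : ℕ → ℝ
  | 0 => x
  | k + 1 => q * greedyRem q x k - if 1 ≤ q * greedyRem q x k then 1 else 0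

def greedyDigit (q x : ℝ) (k : ℕ) : ℕ := if 1 ≤ q * greedyRem q x k then 1 else 0

variable {q x : ℝ}

lemma greedyDigit_le_one (k : ℕ) : greedyDigit q x k ≤ 1 := by
  unfold greedyDigit
  split_ifs <;> simp

lemma greedyRem_mem_Icc (hq1 : 1 < q) (hq2 : q ≤ 2) (hx : x ∈ Icc 0 (1 / (q - 1))) (k : ℕ) :
    greedyRem q x k ∈ Icc 0 (1 / (q - 1)) := by
  induction k with
  | zero => exact hx
  | succ k ih =>
    obtain ⟨h0, h1⟩ := ih
    have hq' : q * (1 / (q - 1)) = 1 / (q - 1) + 1 := by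
      field_simp [show q - 1 ≠ 0 by linarith]
      ring
    have hcap : 1 ≤ 1 / (q - 1) := by
      rw [le_div_iff₀ (by linarith)]
      linarith
    have hmul : q * greedyRem q x k ≤ q * (1 / (q - 1)) := by gcongr
    have hnonneg : 0 ≤ q * greedyRem q x k := by positivity
    simp only [greedyRem]
    split_ifs with h <;> constructor <;> linarith

lemma sum_greedyDigit (hq : q ≠ 0) (n : ℕ) :
    ∑ i ∈ Finset.range n, (greedyDigit q x i : ℝ) / q ^ (i + 1) = x - greedyRem q x n / q ^ n := by
  induction n with
  | zero => simp [greedyRem]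
  | succ n ih =>
    rw [Finset.sum_range_succ, ih, greedyDigit]
    simp only [greedyRem]
    split_ifs <;> field_simp <;> ring

lemma exists_isExpansion (hq1 : 1 < q) (hq2 : q ≤ 2) (hx : x ∈ Icc 0 (1 / (q - 1))) :
    ∃ d, IsExpansion q x d := by
  have hq0 : 0 < q := by linarith
  refine ⟨greedyDigit q x, greedyDigit_le_one, ?_⟩
  have hrem : Tendsto (fun n => greedyRem q x n / q ^ n) atTop (𝓝 0) := by
    have hbound : Tendsto (fun n : ℕ => 1 / (q - 1) * (1 / q) ^ n) atTop (𝓝 0) := by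
      simpa using (tendsto_pow_atTop_nhds_zero_of_lt_one (by positivity)
        ((div_lt_one hq0).2 hq1)).const_mul (1 / (q - 1))
    refine squeeze_zero (fun n => ?_) (fun n => ?_) hbound
    · have := (greedyRem_mem_Icc hq1 hq2 hx n).1
      positivity
    · rw [one_div_pow, ← div_eq_mul_one_div]
      gcongr
      exact (greedyRem_mem_Icc hq1 hq2 hx n).2
  have hsum : Tendsto (fun n => ∑ i ∈ Finset.range n, (greedyDigit q x i : ℝ) / q ^ (i + 1))
      atTop (𝓝 x) := by
    simpa [sum_greedyDigit hq0.ne'] using (tendsto_const_nhds (x := x)).sub hrem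
  exact tendsto_nhds_unique hsum
    (summable_digit_div_pow hq1 greedyDigit_le_one).hasSum.tendsto_sum_nat

end Greedy

def seqCons (a : ℕ) (s : ℕ → ℕ) : ℕ → ℕ
  | 0 => a
  | i + 1 => s i

section Unique

variable {q x y : ℝ} {a b : ℕ} {d e : ℕ → ℕ}

lemma IsExpansion.cons (hq : 1 < q) (ha : a ≤ 1) (he : IsExpansion q y e) :
    IsExpansion q ((a + y) / q) (seqCons a e) := by
  have hdig : ∀ i, seqCons a e i ≤ 1 := fun
    | 0 => ha
    | i + 1 => he.1 i
  exact ⟨hdig, by rw [seqVal_eq_head_add_tail hq hdig, he.2]; rfl⟩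

lemma IsExpansion.eq_head_add_tail (hq : 1 < q) (hd : IsExpansion q x d) :
    x = (d 0 + seqVal q fun i => d (i + 1)) / q := by
  rw [hd.2, seqVal_eq_head_add_tail hq hd.1]

lemma HasUniqueExpansion.tail (hq : 1 < q) (hd : IsExpansion q x d)
    (hu : HasUniqueExpansion q x) : HasUniqueExpansion q (seqVal q fun i => d (i + 1)) := by
  refine ⟨_, ⟨fun i => hd.1 _, rfl⟩, fun e he => funext fun i => ?_⟩
  have hcons : IsExpansion q x (seqCons (d 0) e) := by
    rw [hd.eq_head_add_tail hq]
    exact he.cons hq (hd.1 0)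
  exact congrFun (hu.unique hcons hd) (i + 1)

lemma not_hasUniqueExpansion_of_change_head (hq1 : 1 < q) (hq2 : q ≤ 2) (hd : IsExpansion q x d)
    (hb : b ≤ 1) (hbd : b ≠ d 0)
    (hy : d 0 + (seqVal q fun i => d (i + 1)) - b ∈ Icc 0 (1 / (q - 1))) :
    ¬ HasUniqueExpansion q x := by
  intro hu
  obtain ⟨g, hg⟩ := exists_isExpansion hq1 hq2 hy
  have hcons : IsExpansion q x (seqCons b g) := by
    convert hg.cons hq1 hb using 1
    rw [hd.eq_head_add_tail hq1]
    ring
  exact hbd (congrFun (hu.unique hcons hd) 0)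

lemma HasUniqueExpansion.tail_lt_one (hq1 : 1 < q) (hq2 : q ≤ 2) (hd : IsExpansion q x d)
    (hu : HasUniqueExpansion q x) (h0 : d 0 = 0) : (seqVal q fun i => d (i + 1)) < 1 := by
  by_contra! h
  refine not_hasUniqueExpansion_of_change_head hq1 hq2 hd (b := 1) le_rfl (by omega) ?_ hu
  have := seqVal_le_one_div_sub_one hq1 fun i => hd.1 (i + 1)
  rw [h0]
  constructor <;> push_cast <;> linarith

lemma HasUniqueExpansion.sub_one_lt_tail (hq1 : 1 < q) (hq2 : q ≤ 2) (hd : IsExpansion q x d)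
    (hu : HasUniqueExpansion q x) (h1 : d 0 = 1) :
    1 / (q - 1) - 1 < seqVal q fun i => d (i + 1) := by
  by_contra! h
  refine not_hasUniqueExpansion_of_change_head hq1 hq2 hd (b := 0) (Nat.zero_le 1) (by omega) ?_ hu
  have := seqVal_nonneg (zero_le_one.trans hq1.le) fun i => d (i + 1)
  rw [h1]
  constructor <;> push_cast <;> linarith

lemma HasUniqueExpansion.digit_one_eq_digit_zero (hq1 : 1 < q) (hgold : q ^ 2 ≤ q + 1)
    (hd : IsExpansion q x d) (hu : HasUniqueExpansion q x) : d 1 = d 0 := by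
  have hq2 : q ≤ 2 := by nlinarith
  set y₁ := seqVal q fun i => d (i + 1)
  set y₂ := seqVal q fun i => d (i + 1 + 1)
  have htail : IsExpansion q y₁ fun i => d (i + 1) := ⟨fun i => hd.1 _, rfl⟩
  have hu₁ := hu.tail hq1 hd
  have hy₁ : q * y₁ = d 1 + y₂ := by
    rw [htail.eq_head_add_tail hq1, mul_div_cancel₀ _ (by positivity)]
  have hcap : (q - 1) * (1 / (q - 1)) = 1 := by field_simp [show q - 1 ≠ 0 by linarith]
  have h0 := hd.1 0
  have h1 := hd.1 1
  interval_cases hd0 : d 0 <;> interval_cases hd1 : d 1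
  all_goals first | rfl | exfalso
  · -- `01`: `q * y₁ = 1 + y₂ > 1/(q-1)`, while `y₁ < 1` and `q (q - 1) ≤ 1`
    have hlt := hu.tail_lt_one hq1 hq2 hd hd0
    have hgt := hu₁.sub_one_lt_tail hq1 hq2 htail hd1
    push_cast at hy₁
    nlinarith [seqVal_nonneg (by linarith : (0 : ℝ) ≤ q) fun i => d (i + 1)]
  · -- `10`: `q * y₁ = y₂ < 1`, while `y₁ > 1/(q-1) - 1 ≥ 1/q`
    have hgt := hu.sub_one_lt_tail hq1 hq2 hd hd0
    have hlt := hu₁.tail_lt_one hq1 hq2 htail hd1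
    push_cast at hy₁
    have hcap_lt : 1 / (q - 1) < q := by
      nlinarith [mul_lt_mul_of_pos_left hgt (by linarith : (0 : ℝ) < q)]
    nlinarith [mul_lt_mul_of_pos_left hcap_lt (by linarith : (0 : ℝ) < q - 1)]

lemma HasUniqueExpansion.digit_eq_digit_zero (hq1 : 1 < q) (hgold : q ^ 2 ≤ q + 1)
    (hd : IsExpansion q x d) (hu : HasUniqueExpansion q x) (n : ℕ) : d n = d 0 := by
  induction n generalizing x d with
  | zero => rfl
  | succ n ih =>
    exact (ih ⟨fun i => hd.1 _, rfl⟩ (hu.tail hq1 hd)).trans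
      (hu.digit_one_eq_digit_zero hq1 hgold hd)

lemma hasUniqueExpansion_one_div_sub_one (hq : 1 < q) : HasUniqueExpansion q (1 / (q - 1)) := by
  refine ⟨fun _ => 1, ⟨fun _ => le_rfl, (seqVal_one hq).symm⟩, fun e ⟨he1, he2⟩ => ?_⟩
  funext j
  by_contra hj
  have hej : e j = 0 := by have := he1 j; omega
  have hlt : seqVal q e < seqVal q fun _ => 1 :=
    (summable_digit_div_pow hq he1).tsum_lt_tsum (i := j) (fun i => by gcongr; exact_mod_cast he1 i)
      (by rw [hej, Nat.cast_zero, zero_div]; positivity) (summable_digit_div_pow hq fun _ => le_rfl)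
  rw [seqVal_one hq, ← he2] at hlt
  exact hlt.false

lemma Uset_subset_of_sq_le_add_one (hq1 : 1 < q) (hgold : q ^ 2 ≤ q + 1) :
    Uset q ⊆ {0, 1 / (q - 1)} := by
  rintro x ⟨-, hu⟩
  obtain ⟨d, hd⟩ := hu.exists
  have hconst : d = fun _ => d 0 := funext (hu.digit_eq_digit_zero hq1 hgold hd)
  have h0 := hd.1 0
  rw [hd.2, hconst]
  interval_cases d 0
  · left
    simp [seqVal]
  · right
    exact seqVal_one hq1

lemma one_div_sub_one_mem_Uset (hq : 1 < q) : 1 / (q - 1) ∈ Uset q :=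
  ⟨⟨one_div_nonneg.2 (by linarith), le_rfl⟩,
    hasUniqueExpansion_one_div_sub_one hq⟩

end Unique

lemma goldenRatio_sub_one : φ - 1 = φ⁻¹ := by
  rw [inv_goldenRatio, ← one_sub_goldenConj]
  ring

lemma one_div_goldenRatio_sub_one : 1 / (φ - 1) = φ := by
  rw [goldenRatio_sub_one, one_div, inv_inv]

lemma biUnion_Uset_inter_Ioi_one : (⋃ q ∈ Ioc 1 φ, Uset q) ∩ Ioi 1 = Ici φ := by
  ext x
  simp only [mem_inter_iff, mem_iUnion₂, mem_Ioc, mem_Ioi, mem_Ici, exists_prop]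
  constructor
  · rintro ⟨⟨q, ⟨hq1, hqφ⟩, hx⟩, hx1⟩
    have hgold : q ^ 2 ≤ q + 1 := by nlinarith [goldenRatio_sq]
    rcases Uset_subset_of_sq_le_add_one hq1 hgold hx with rfl | rfl
    · exact absurd hx1 (by norm_num)
    · rw [← one_div_goldenRatio_sub_one]
      gcongr
  · intro hx
    have hx0 : 0 < x := by linarith [one_lt_goldenRatio]
    have hq1 : 1 < 1 + 1 / x := by simp [hx0]
    refine ⟨⟨1 + 1 / x, ⟨hq1, ?_⟩, ?_⟩, by linarith [one_lt_goldenRatio]⟩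
    · have : 1 / x ≤ φ⁻¹ := by
        rw [one_div]
        gcongr
      linarith [goldenRatio_sub_one]
    · convert one_div_sub_one_mem_Uset hq1
      simp

section ThueMorse

variable {τ : ℕ → ℕ} {Q : ℕ → ℝ}

lemma IsThueMorse.one_eq (hτ : IsThueMorse τ) : τ 1 = 1 := by
  simpa [hτ.1] using hτ.2.2 0

lemma IsThueMorse.two_eq (hτ : IsThueMorse τ) : τ 2 = 1 := by
  simpa [hτ.one_eq] using hτ.2.1 1

lemma IsThueMorse.zVal_one (hτ : IsThueMorse τ) : zVal τ Q 1 = seqVal (Q 1) fun _ => 1 := by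
  unfold zVal
  congr 1
  funext j
  rcases j with _ | j <;> simp [prefPeriodic, tmPrefix, hτ.one_eq, hτ.two_eq, Nat.mod_one]

lemma IsBaseSeq.one_eq_goldenRatio (hτ : IsThueMorse τ) (hQ : IsBaseSeq τ Q) : Q 1 = φ := by
  obtain ⟨hQ1, -, hsum⟩ := hQ.2 1 le_rfl
  simp only [pow_one, Finset.sum_range_succ, Finset.range_one, Finset.sum_singleton, zero_add,
    hτ.one_eq, hτ.two_eq, Nat.cast_one, one_div, Nat.reduceAdd] at hsum
  have hsq : Q 1 ^ 2 = Q 1 + 1 := by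
    field_simp at hsum
    linarith
  have hfac : (Q 1 - φ) * (Q 1 - ψ) = 0 := by
    linear_combination hsq - Q 1 * goldenRatio_add_goldenConj + goldenRatio_mul_goldenConj
  rcases mul_eq_zero.1 hfac with h | h
  · linarith
  · linarith [goldenConj_neg]

end ThueMorse

/-- `D_1 ∩ (1, ∞) = [z_1, ∞)` with `z_1 = q_G`. -/
theorem D_one_inter_Ioi (τ : ℕ → ℕ) (hτ : IsThueMorse τ)
    (Q : ℕ → ℝ) (hQ : IsBaseSeq τ Q) :
    D Q 1 ∩ Set.Ioi 1 = Set.Ici (zVal τ Q 1) ∧ zVal τ Q 1 = qG := by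
  have hQ1 : Q 1 = φ := hQ.one_eq_goldenRatio hτ
  have hz : zVal τ Q 1 = qG := by
    rw [hτ.zVal_one, hQ1, seqVal_one one_lt_goldenRatio, one_div_goldenRatio_sub_one]
    rfl
  have hD : D Q 1 = ⋃ q ∈ Ioc 1 φ, Uset q := by
    simp only [D, Nat.sub_self, hQ.1, hQ1]
  rw [hz, hD]
  exact ⟨biUnion_Uset_inter_Ioi_one, rfl⟩
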